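/- Let K ⊆ ℝⁿ be a convex polytope with nonempty interior having exactly m+1 vertices. Then for every positive integer l, Γ_l(K) ≤ Γ_l(K_m^{1*}). -/

import Mathlib

/-!
An affine map `T` carries a covering `S ⊆ C + γ • S` to the covering
`T '' S ⊆ {T c - γ • T 0 | c ∈ C} + γ • T '' S`, since
`T (c + γ • t) = (T c - γ • T 0) + γ • T t`; so `Γ_l (T '' S) ≤ Γ_l S`. A polytope with `m + 1`
vertices `v₀, …, v_m` is the convex hull of its vertices (Krein–Milman), hence the image of
`K_m^{1*}` under the affine map sending `0` to `v₀` and `eᵢ` to `vᵢ`. The degenerate cases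
`n = 0` (both sets are the single point of `ℝ⁰`) and `m = 0` (a point has empty interior) are
settled directly.
-/

open Set Pointwise

/-- The covering functional `Γ_l(K)`: the infimum of all `γ > 0` such that `K` can be
covered by `l` translates of `γ • K`. -/
noncomputable def coveringFunctional {n : ℕ} (l : ℕ) (K : Set (Fin n → ℝ)) : ℝ :=
  sInf {γ : ℝ | 0 < γ ∧ ∃ C : Set (Fin n → ℝ), C.Finite ∧ C.ncard = l ∧ K ⊆ C + γ • K}

theorem Set.Finite.exists_superset_ncard_eq {α : Type*} [Infinite α] {C : Set α}
    (hC : C.Finite) {l : ℕ} (hCl : C.ncard ≤ l) :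
    ∃ C' : Set α, C ⊆ C' ∧ C'.Finite ∧ C'.ncard = l := by
  obtain ⟨t, hCt, htl⟩ := Infinite.exists_superset_card_eq hC.toFinset l
    (by rwa [← ncard_eq_toFinset_card C hC])
  exact ⟨t, hC.toFinset_subset.mp hCt, t.finite_toSet, by rw [ncard_coe_finset, htl]⟩

theorem AffineMap.image_subset_add_smul_image {k V W : Type*} [Ring k]
    [AddCommGroup V] [Module k V] [AddCommGroup W] [Module k W] (T : V →ᵃ[k] W)
    {S C : Set V} {γ : k} (h : S ⊆ C + γ • S) :
    T '' S ⊆ (fun c => T c - γ • T 0) '' C + γ • T '' S := by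
  rintro _ ⟨_, hs, rfl⟩
  obtain ⟨c, hc, _, ⟨t, ht, rfl⟩, rfl⟩ := h hs
  have hT : T (c + γ • t) = (T c - γ • T 0) + γ • T t := by
    have h1 := T.map_vadd c (γ • t)
    have h2 := T.linearMap_vsub t 0
    simp only [vadd_eq_add, vsub_eq_sub, sub_zero, map_smul] at h1 h2
    rw [add_comm c, h1, h2, smul_sub]
    abel
  exact hT ▸ add_mem_add (mem_image_of_mem _ hc) (smul_mem_smul_set (mem_image_of_mem T ht))

section Covering

variable {E F : Type*} [AddCommGroup E] [Module ℝ E] [AddCommGroup F] [Module ℝ F]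

def coveringScales (l : ℕ) (K : Set E) : Set ℝ :=
  {γ | 0 < γ ∧ ∃ C : Set E, C.Finite ∧ C.ncard = l ∧ K ⊆ C + γ • K}

theorem one_mem_coveringScales [Infinite E] {l : ℕ} (hl : 0 < l) (K : Set E) :
    1 ∈ coveringScales l K := by
  obtain ⟨C, hC, hCfin, hCl⟩ := (finite_singleton (0 : E)).exists_superset_ncard_eq
    (l := l) (by rwa [ncard_singleton])
  refine ⟨one_pos, C, hCfin, hCl, fun x hx => ?_⟩
  simpa using add_mem_add (singleton_subset_iff.mp hC) (smul_mem_smul_set (a := (1 : ℝ)) hx)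

theorem coveringScales_subset_image [Infinite F] (T : E →ᵃ[ℝ] F) (l : ℕ) (S : Set E) :
    coveringScales l S ⊆ coveringScales l (T '' S) := by
  rintro γ ⟨hγ, C, hC, hCl, hS⟩
  obtain ⟨C', hCC', hC', hC'l⟩ := (hC.image fun c => T c - γ • T 0).exists_superset_ncard_eq
    ((ncard_image_le hC).trans hCl.le)
  exact ⟨hγ, C', hC', hC'l,
    (T.image_subset_add_smul_image hS).trans (add_subset_add_right hCC')⟩

end Covering

theorem coveringFunctional_image_le {m n : ℕ} [NeZero m] [NeZero n] {l : ℕ} (hl : 0 < l)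
    (T : (Fin m → ℝ) →ᵃ[ℝ] (Fin n → ℝ)) (S : Set (Fin m → ℝ)) :
    coveringFunctional l (T '' S) ≤ coveringFunctional l S :=
  csInf_le_csInf ⟨0, fun _ hγ => hγ.1.le⟩ ⟨1, one_mem_coveringScales hl S⟩
    (coveringScales_subset_image T l S)

section Polytope

variable {E : Type*} [AddCommGroup E] [Module ℝ E] [TopologicalSpace E] [T2Space E]
  [IsTopologicalAddGroup E] [ContinuousSMul ℝ E] [LocallyConvexSpace ℝ E]

theorem Set.Finite.convexHull_extremePoints_convexHull {V : Set E} (hV : V.Finite) :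
    convexHull ℝ (extremePoints ℝ (convexHull ℝ V)) = convexHull ℝ V := by
  have hfin : (extremePoints ℝ (convexHull ℝ V)).Finite :=
    hV.subset extremePoints_convexHull_subset
  rw [← (hfin.isCompact_convexHull ℝ).isClosed.closure_eq,
    closure_convexHull_extremePoints (hV.isCompact_convexHull ℝ) (convex_convexHull ℝ V)]

theorem Set.Finite.exists_convexHull_eq_convexHull_range {V : Set E} (hV : V.Finite) {m : ℕ}
    (hm : (extremePoints ℝ (convexHull ℝ V)).ncard = m + 1) :
    ∃ v : Fin (m + 1) → E, convexHull ℝ V = convexHull ℝ (range v) := by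
  obtain ⟨k, v, hv, hrange⟩ :=
    (hV.subset (extremePoints_convexHull_subset (𝕜 := ℝ))).fin_param
  obtain rfl : k = m + 1 := by
    rw [← hm, ← hrange, ncard_range_of_injective hv, Nat.card_eq_fintype_card,
      Fintype.card_fin]
  exact ⟨v, by rw [hrange, hV.convexHull_extremePoints_convexHull]⟩

end Polytope

section CornerSimplex

def cornerSimplex (m : ℕ) : Set (Fin m → ℝ) :=
  {x | (∑ i, x i) ≤ 1 ∧ ∀ i, 0 ≤ x i}

theorem convex_cornerSimplex (m : ℕ) : Convex ℝ (cornerSimplex m) := by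
  have hsum : IsLinearMap ℝ fun x : Fin m → ℝ => ∑ i, x i :=
    ⟨fun _ _ => Finset.sum_add_distrib, fun _ _ => by simp [Finset.mul_sum]⟩
  exact (convex_halfSpace_le hsum 1).inter (convex_Ici 0)

theorem cornerSimplex_eq_convexHull (m : ℕ) :
    cornerSimplex m = convexHull ℝ (insert 0 (range fun i => Pi.single i 1)) := by
  apply Subset.antisymm
  · rintro x ⟨hsum, hx⟩
    have hx_eq : x = ∑ j, (Fin.cons (1 - ∑ i, x i) x : Fin (m + 1) → ℝ) j •
        (Fin.cons 0 (fun i => Pi.single i 1) : Fin (m + 1) → Fin m → ℝ) j := by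
      ext k
      simp [Fin.sum_univ_succ, Finset.sum_apply, Pi.single_apply]
    rw [hx_eq]
    refine (convex_convexHull ℝ _).sum_mem (fun j _ => ?_) ?_
      (fun j _ => subset_convexHull ℝ _ ?_)
    · cases j using Fin.cases <;> simp [hsum, hx]
    · simp [Fin.sum_univ_succ]
    · cases j using Fin.cases <;> simp
  · refine convexHull_min (insert_subset ⟨by simp, fun _ => le_rfl⟩ ?_)
      (convex_cornerSimplex m)
    rintro _ ⟨i, rfl⟩
    exact ⟨by simp, (Pi.single_nonneg.mpr zero_le_one : (0 : Fin m → ℝ) ≤ Pi.single i 1)⟩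

variable {E : Type*} [AddCommGroup E] [Module ℝ E]

def cornerSimplexMap {m : ℕ} (v : Fin (m + 1) → E) : (Fin m → ℝ) →ᵃ[ℝ] E :=
  (Fintype.linearCombination ℝ fun i => v i.succ - v 0).toAffineMap + AffineMap.const ℝ _ (v 0)

theorem image_cornerSimplexMap {m : ℕ} (v : Fin (m + 1) → E) :
    cornerSimplexMap v '' cornerSimplex m = convexHull ℝ (range v) := by
  rw [cornerSimplex_eq_convexHull, AffineMap.image_convexHull, image_insert_eq, ← range_comp,
    Fin.range_fin_succ v]
  congr 3
  · simp [cornerSimplexMap]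
  · ext i
    simp [cornerSimplexMap, Fintype.linearCombination_apply_single, Fin.tail]

end CornerSimplex

/-- If `K ⊆ ℝⁿ` is a convex polytope with nonempty interior having exactly `m + 1`
vertices (extreme points), then `Γ_l(K) ≤ Γ_l(K_m^{1*})` for every positive integer `l`,
where `K_m^{1*}` is the standard `m`-dimensional simplex. -/
theorem coveringFunctional_le_simplex (n m : ℕ) (K : Set (Fin n → ℝ))
    (hpoly : ∃ V : Finset (Fin n → ℝ), K = convexHull ℝ (V : Set (Fin n → ℝ)))
    (hint : (interior K).Nonempty)
    (hvert : (Set.extremePoints ℝ K).ncard = m + 1)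
    (l : ℕ) (hl : 0 < l) :
    coveringFunctional l K ≤
      coveringFunctional l {x : Fin m → ℝ | (∑ i, x i) ≤ 1 ∧ ∀ i, 0 ≤ x i} := by
  obtain ⟨V, rfl⟩ := hpoly
  obtain ⟨v, hv⟩ := V.finite_toSet.exists_convexHull_eq_convexHull_range hvert
  rcases n with _ | n
  · obtain rfl : m = 0 := by
      have := ncard_le_one_of_subsingleton
        (extremePoints ℝ (convexHull ℝ (V : Set (Fin 0 → ℝ))))
      omega
    have hS : (cornerSimplex 0).Nonempty := ⟨0, by simp [cornerSimplex]⟩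
    rw [(hint.mono interior_subset).eq_univ]
    exact (congrArg _ hS.eq_univ).ge
  rw [hv] at hint ⊢
  rcases m with _ | m
  · simp [range_unique, interior_singleton] at hint
  · rw [← image_cornerSimplexMap]
    exact coveringFunctional_image_le hl _ _
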